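/- Let G be a pseudo strongly regular graph containing two non-incident (vertex-disjoint) edges. Then the line graph L(G) is pseudo strongly regular with parameter μ = 2 if and only if every two adjacent vertices of G have at most one common neighbour (i.e., G is (diamond, K₄)-free) and every two non-incident edges of G lie on a common 4-cycle. -/

import Mathlib

/-!
Two disjoint edges `ab`, `cd` of `G` have as common neighbours in `L(G)` exactly the edges of `G`
joining `{a, b}` to `{c, d}`, so `L(G)` has `μ = 2` iff every two disjoint edges are joined by
exactly two edges. If `uv` lay in two triangles `uvw₁`, `uvw₂`, the disjoint
edges `uw₁`, `vw₂` would be joined by three edges. If the two joining edges of `ab`, `cd` are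
disjoint, they close a 4-cycle; otherwise one vertex, say `a`, sees both `c` and `d`. Since `G` is
regular and `ab` lies in at most one triangle, `b` then has a neighbour `x ≠ a` not adjacent to
`a`, and the pairs `(ac, bx)`, `(ad, bx)` force `x ~ c` and `x ~ d`: two triangles on `cd`.
Conversely, in a diamond-free graph a 4-cycle through `ab` and `cd` has no chords, so exactly two
edges join them. Regularity of `L(G)` (of degree `2k - 2`) is automatic.
-/

open SimpleGraph

def SimpleGraph.IsPseudoSRG {V : Type*} [Fintype V] (G : SimpleGraph V) (n k m : ℕ) : Prop :=
  Fintype.card V = n ∧ (∀ v : V, (G.neighborSet v).ncard = k) ∧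
    ∀ u v : V, u ≠ v → ¬G.Adj u v → (G.commonNeighbors u v).ncard = m

theorem Set.ncard_insert_inter {α : Type*} {s t : Set α} {a : α} [Decidable (a ∈ t)]
    (ha : a ∉ s) (hs : s.Finite := by toFinite_tac) :
    (insert a s ∩ t).ncard = (s ∩ t).ncard + if a ∈ t then 1 else 0 := by
  split_ifs with h
  · rw [Set.insert_inter_of_mem h,
      Set.ncard_insert_of_notMem (fun h' => ha h'.1) (hs.inter_of_left t)]
  · rw [Set.insert_inter_of_notMem h, add_zero]

theorem Set.ncard_singleton_inter_eq_ite {α : Type*} {t : Set α} {a : α} [Decidable (a ∈ t)] :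
    ({a} ∩ t).ncard = if a ∈ t then 1 else 0 := by
  rw [Set.singleton_def, Set.ncard_insert_inter (Set.notMem_empty a), Set.empty_inter,
    Set.ncard_empty, zero_add]

namespace SimpleGraph

variable {V : Type*} {G : SimpleGraph V}

theorem image_lineGraph_neighborSet {u v : V} (h : G.Adj u v) :
    Subtype.val '' G.lineGraph.neighborSet ⟨s(u, v), h⟩ =
      (G.incidenceSet u ∪ G.incidenceSet v) \ {s(u, v)} := by
  ext z
  constructor
  · rintro ⟨⟨z, hz⟩, hadj, rfl⟩
    obtain ⟨hne, w, hw, hwz⟩ := lineGraph_adj_iff_exists.1 hadj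
    refine ⟨?_, fun h => hne (Subtype.ext h.symm)⟩
    rcases Sym2.mem_iff.1 hw with rfl | rfl
    exacts [Or.inl ⟨hz, hwz⟩, Or.inr ⟨hz, hwz⟩]
  · rintro ⟨hz, hne⟩
    have hzE : z ∈ G.edgeSet := by rcases hz with hz | hz <;> exact hz.1
    refine ⟨⟨z, hzE⟩,
      lineGraph_adj_iff_exists.2 ⟨fun h => hne (congrArg Subtype.val h).symm, ?_⟩, rfl⟩
    rcases hz with hz | hz
    exacts [⟨u, Sym2.mem_mk_left u v, hz.2⟩, ⟨v, Sym2.mem_mk_right u v, hz.2⟩]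

theorem ncard_lineGraph_neighborSet [Finite V] {k : ℕ}
    (hreg : ∀ v, (G.neighborSet v).ncard = k) (e : G.edgeSet) :
    (G.lineGraph.neighborSet e).ncard = 2 * k - 2 := by
  classical
  obtain ⟨e, he⟩ := e
  induction e using Sym2.inductionOn with | hf u v => ?_
  have hinc : ∀ w, (G.incidenceSet w).ncard = k := fun w =>
    (Set.ncard_congr' (G.incidenceSetEquivNeighborSet w)).trans (hreg w)
  have hunion := Set.ncard_union_add_ncard_inter (G.incidenceSet u) (G.incidenceSet v)
  rw [G.incidenceSet_inter_incidenceSet_of_adj he, Set.ncard_singleton, hinc, hinc] at hunion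
  rw [← Set.ncard_image_of_injective _ Subtype.val_injective,
    image_lineGraph_neighborSet (G.mem_edgeSet.1 he),
    Set.ncard_sdiff_singleton_of_mem (Set.mem_union_left _ ((G.mem_incidenceSet u v).2 he))]
  omega

theorem image_lineGraph_commonNeighbors {a b c d : V} (hab : G.Adj a b) (hcd : G.Adj c d)
    (hac : a ≠ c) (had : a ≠ d) (hbc : b ≠ c) (hbd : b ≠ d) :
    Subtype.val '' G.lineGraph.commonNeighbors ⟨s(a, b), hab⟩ ⟨s(c, d), hcd⟩ =
      {s(a, c), s(a, d), s(b, c), s(b, d)} ∩ G.edgeSet := by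
  rw [commonNeighbors, Set.image_inter Subtype.val_injective, image_lineGraph_neighborSet hab,
    image_lineGraph_neighborSet hcd]
  ext z
  induction z using Sym2.inductionOn with | hf x y => ?_
  simp only [Set.mem_inter_iff, Set.mem_sdiff, Set.mem_union, mk'_mem_incidenceSet_iff,
    Set.mem_singleton_iff, Sym2.eq_iff, Set.mem_insert_iff, mem_edgeSet]
  grind

theorem ne_and_not_lineGraph_adj_iff {a b c d : V} (hab : G.Adj a b) (hcd : G.Adj c d) :
    ((⟨s(a, b), hab⟩ : G.edgeSet) ≠ ⟨s(c, d), hcd⟩ ∧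
        ¬G.lineGraph.Adj ⟨s(a, b), hab⟩ ⟨s(c, d), hcd⟩) ↔
      a ≠ c ∧ a ≠ d ∧ b ≠ c ∧ b ≠ d := by
  rw [lineGraph_adj_iff_exists]
  simp only [ne_eq, Sym2.mem_iff, exists_eq_or_imp, existsAndEq, true_and, not_and, not_or]
  grind [hab.ne]

def crossAdjCount (G : SimpleGraph V) [DecidableRel G.Adj] (a b c d : V) : ℕ :=
  (if G.Adj a c then 1 else 0) + (if G.Adj a d then 1 else 0) +
    (if G.Adj b c then 1 else 0) + (if G.Adj b d then 1 else 0)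

variable [DecidableRel G.Adj]

theorem ncard_lineGraph_commonNeighbors {a b c d : V} (hab : G.Adj a b)
    (hcd : G.Adj c d) (hac : a ≠ c) (had : a ≠ d) (hbc : b ≠ c) (hbd : b ≠ d) :
    (G.lineGraph.commonNeighbors ⟨s(a, b), hab⟩ ⟨s(c, d), hcd⟩).ncard =
      G.crossAdjCount a b c d := by
  rw [← Set.ncard_image_of_injective _ Subtype.val_injective,
    image_lineGraph_commonNeighbors hab hcd hac had hbc hbd, Set.ncard_insert_inter,
    Set.ncard_insert_inter, Set.ncard_insert_inter, Set.ncard_singleton_inter_eq_ite]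
  · simp only [mem_edgeSet, crossAdjCount]
    ring
  all_goals simp [hab.ne, hcd.ne, hac, had, hbd]

theorem forall_ncard_lineGraph_commonNeighbors_iff {m : ℕ} :
    (∀ e₁ e₂ : G.edgeSet, e₁ ≠ e₂ → ¬G.lineGraph.Adj e₁ e₂ →
        (G.lineGraph.commonNeighbors e₁ e₂).ncard = m) ↔
      ∀ a b c d : V, G.Adj a b → G.Adj c d → a ≠ c → a ≠ d → b ≠ c → b ≠ d →
        G.crossAdjCount a b c d = m := by
  constructor
  · intro h a b c d hab hcd hac had hbc hbd
    obtain ⟨hne, hnadj⟩ := (ne_and_not_lineGraph_adj_iff hab hcd).2 ⟨hac, had, hbc, hbd⟩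
    rw [← ncard_lineGraph_commonNeighbors hab hcd hac had hbc hbd]
    exact h _ _ hne hnadj
  · rintro h ⟨e₁, he₁⟩ ⟨e₂, he₂⟩ hne hnadj
    induction e₁ using Sym2.inductionOn with | hf a b => ?_
    induction e₂ using Sym2.inductionOn with | hf c d => ?_
    obtain ⟨hac, had, hbc, hbd⟩ := (ne_and_not_lineGraph_adj_iff he₁ he₂).1 ⟨hne, hnadj⟩
    rw [ncard_lineGraph_commonNeighbors he₁ he₂ hac had hbc hbd]
    exact h a b c d he₁ he₂ hac had hbc hbd

variable [Finite V]

theorem ncard_commonNeighbors_le_one_of_crossAdjCount_le_two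
    (hW : ∀ a b c d : V, G.Adj a b → G.Adj c d → a ≠ c → a ≠ d → b ≠ c → b ≠ d →
      G.crossAdjCount a b c d ≤ 2)
    {u v : V} (huv : G.Adj u v) : (G.commonNeighbors u v).ncard ≤ 1 := by
  refine Set.ncard_le_one_iff_subsingleton.2 fun w₁ hw₁ w₂ hw₂ => ?_
  rw [mem_commonNeighbors] at hw₁ hw₂
  by_contra hne
  have hcount := hW u w₁ v w₂ hw₁.1 hw₂.2 huv.ne hw₂.1.ne hw₁.2.ne.symm hne
  unfold crossAdjCount at hcount
  rw [if_pos huv, if_pos hw₂.1, if_pos hw₁.2.symm] at hcount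
  split_ifs at hcount <;> omega

theorem not_adj_and_adj_of_crossAdjCount_eq_two {k : ℕ}
    (hreg : ∀ v, (G.neighborSet v).ncard = k)
    (hW : ∀ a b c d : V, G.Adj a b → G.Adj c d → a ≠ c → a ≠ d → b ≠ c → b ≠ d →
      G.crossAdjCount a b c d = 2)
    {a b c d : V} (hab : G.Adj a b) (hcd : G.Adj c d) (hac : a ≠ c) (had : a ≠ d) (hbc : b ≠ c)
    (hbd : b ≠ d) : ¬(G.Adj a c ∧ G.Adj a d) := by
  rintro ⟨hac', had'⟩
  have hA : ∀ u v, G.Adj u v → (G.commonNeighbors u v).Subsingleton := fun u v huv =>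
    Set.ncard_le_one_iff_subsingleton.1 <| ncard_commonNeighbors_le_one_of_crossAdjCount_le_two
      (fun a b c d hab hcd hac had hbc hbd => (hW a b c d hab hcd hac had hbc hbd).le) huv
  obtain ⟨hbc', hbd'⟩ : ¬G.Adj b c ∧ ¬G.Adj b d := by
    have hcount := hW a b c d hab hcd hac had hbc hbd
    simp only [crossAdjCount, if_pos hac', if_pos had'] at hcount
    constructor <;> intro h <;> rw [if_pos h] at hcount <;> split_ifs at hcount <;> omega
  obtain ⟨x, hbx, hxa, hax⟩ : ∃ x, G.Adj b x ∧ x ≠ a ∧ ¬G.Adj a x := by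
    by_contra! h
    have hsub : G.neighborSet b ⊆ insert a (G.commonNeighbors a b) := fun x hx => by
      rcases eq_or_ne x a with hxa | hxa
      exacts [Or.inl hxa, Or.inr ⟨h x hx hxa, hx⟩]
    have ha : 2 < (G.neighborSet a).ncard :=
      (Set.two_lt_ncard_iff (Set.toFinite _)).2 ⟨b, c, d, hab, hac', had', hbc, hbd, hcd.ne⟩
    have := Set.ncard_le_ncard hsub
    have := Set.ncard_insert_le a (G.commonNeighbors a b)
    have := Set.ncard_le_one_iff_subsingleton.2 (hA a b hab)
    have := hreg a
    have := hreg b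
    omega
  have hx : ∀ y, G.Adj a y → y ≠ b → ¬G.Adj b y → G.Adj y x := fun y hay hyb hby => by
    have h := hW a y b x hay hbx hab.ne hxa.symm hyb fun hyx => hby (hyx ▸ hbx)
    simp only [crossAdjCount, if_pos hab, if_neg hax, if_neg fun h : G.Adj y b => hby h.symm]
      at h
    split_ifs at h with hyx <;> first | exact hyx | omega
  exact hxa (hA c d hcd ⟨hx c hac' hbc.symm hbc', hx d had' hbd.symm hbd'⟩
    ⟨hac'.symm, had'.symm⟩)

theorem adj_and_adj_or_of_crossAdjCount_eq_two {k : ℕ}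
    (hreg : ∀ v, (G.neighborSet v).ncard = k)
    (hW : ∀ a b c d : V, G.Adj a b → G.Adj c d → a ≠ c → a ≠ d → b ≠ c → b ≠ d →
      G.crossAdjCount a b c d = 2)
    {a b c d : V} (hab : G.Adj a b) (hcd : G.Adj c d) (hac : a ≠ c) (had : a ≠ d) (hbc : b ≠ c)
    (hbd : b ≠ d) : (G.Adj a c ∧ G.Adj b d) ∨ (G.Adj a d ∧ G.Adj b c) := by
  have h := hW a b c d hab hcd hac had hbc hbd
  have ha := not_adj_and_adj_of_crossAdjCount_eq_two hreg hW hab hcd hac had hbc hbd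
  have hb := not_adj_and_adj_of_crossAdjCount_eq_two hreg hW hab.symm hcd hbc hbd hac had
  have hc := not_adj_and_adj_of_crossAdjCount_eq_two hreg hW hcd hab hac.symm hbc.symm had.symm
    hbd.symm
  have hd := not_adj_and_adj_of_crossAdjCount_eq_two hreg hW hcd.symm hab had.symm hbd.symm
    hac.symm hbc.symm
  rw [G.adj_comm c, G.adj_comm c] at hc
  rw [G.adj_comm d, G.adj_comm d] at hd
  unfold crossAdjCount at h
  split_ifs at h <;> first | omega | tauto

theorem crossAdjCount_eq_two
    (hA : ∀ u v : V, G.Adj u v → (G.commonNeighbors u v).ncard ≤ 1)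
    {a b c d : V} (hab : G.Adj a b) (hcd : G.Adj c d) (hac : a ≠ c) (had : a ≠ d) (hbc : b ≠ c)
    (hbd : b ≠ d) (hcyc : (G.Adj a c ∧ G.Adj b d) ∨ (G.Adj a d ∧ G.Adj b c)) :
    G.crossAdjCount a b c d = 2 := by
  have hA' : ∀ u v, G.Adj u v → (G.commonNeighbors u v).Subsingleton := fun u v huv =>
    Set.ncard_le_one_iff_subsingleton.1 (hA u v huv)
  rcases hcyc with ⟨h₁, h₂⟩ | ⟨h₁, h₂⟩
  · have hnad : ¬G.Adj a d := fun h => hbc (hA' a d h ⟨hab, h₂.symm⟩ ⟨h₁, hcd.symm⟩)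
    have hnbc : ¬G.Adj b c := fun h => had (hA' b c h ⟨hab.symm, h₁.symm⟩ ⟨h₂, hcd⟩)
    simp [crossAdjCount, h₁, h₂, hnad, hnbc]
  · have hnac : ¬G.Adj a c := fun h => hbd (hA' a c h ⟨hab, h₂.symm⟩ ⟨h₁, hcd⟩)
    have hnbd : ¬G.Adj b d := fun h => hac (hA' b d h ⟨hab.symm, h₁.symm⟩ ⟨h₂, hcd.symm⟩)
    simp [crossAdjCount, h₁, h₂, hnac, hnbd]

end SimpleGraph

theorem stmt_13_general {V : Type*} [Fintype V] (G : SimpleGraph V) [DecidableRel G.Adj]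
    (n k μ : ℕ) (hG : G.IsPseudoSRG n k μ) :
    (∃ m d : ℕ, G.lineGraph.IsPseudoSRG m d 2) ↔
      ((∀ u v : V, G.Adj u v → (G.commonNeighbors u v).ncard ≤ 1) ∧
        ∀ a b c d : V, G.Adj a b → G.Adj c d → a ≠ c → a ≠ d → b ≠ c → b ≠ d →
          ((G.Adj a c ∧ G.Adj b d) ∨ (G.Adj a d ∧ G.Adj b c))) := by
  obtain ⟨-, hreg, -⟩ := hG
  constructor
  · rintro ⟨-, -, -, -, hL⟩
    have hW := forall_ncard_lineGraph_commonNeighbors_iff.1 hL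
    exact ⟨fun u v => ncard_commonNeighbors_le_one_of_crossAdjCount_le_two
        fun a b c d hab hcd hac had hbc hbd => (hW a b c d hab hcd hac had hbc hbd).le,
      fun a b c d => adj_and_adj_or_of_crossAdjCount_eq_two hreg hW⟩
  · rintro ⟨hA, hcyc⟩
    refine ⟨_, 2 * k - 2, rfl, ncard_lineGraph_neighborSet hreg,
      forall_ncard_lineGraph_commonNeighbors_iff.2 fun a b c d hab hcd hac had hbc hbd => ?_⟩
    exact crossAdjCount_eq_two hA hab hcd hac had hbc hbd (hcyc a b c d hab hcd hac had hbc hbd)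

/-- for a pseudo strongly regular graph `G` with two non-incident edges, `L(G)` is
pseudo strongly regular with parameter `μ = 2` iff `G` is (diamond, K₄)-free (adjacent vertices
have at most one common neighbour) and every two non-incident edges of `G` lie on a common
4-cycle. -/
theorem stmt_13 {V : Type*} [Fintype V] [DecidableEq V] (G : SimpleGraph V) [DecidableRel G.Adj]
    (n k μ : ℕ) (hG : G.IsPseudoSRG n k μ)
    (hne : ∃ a b c d : V, G.Adj a b ∧ G.Adj c d ∧ a ≠ c ∧ a ≠ d ∧ b ≠ c ∧ b ≠ d) :
    (∃ m d : ℕ, G.lineGraph.IsPseudoSRG m d 2) ↔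
      ((∀ u v : V, G.Adj u v → (G.commonNeighbors u v).ncard ≤ 1) ∧
        ∀ a b c d : V, G.Adj a b → G.Adj c d → a ≠ c → a ≠ d → b ≠ c → b ≠ d →
          ((G.Adj a c ∧ G.Adj b d) ∨ (G.Adj a d ∧ G.Adj b c))) :=
  stmt_13_general G n k μ hG
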